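/- Define l_0 = l_F - Σ_{j=1}^n (-1)^{p(λ_{≤j})} q^{-λ_{≤j}} l_j in W. Then E(l_0 ∧ l_I) = l_I for every subset I ⊆ {1,...,n}, where E = l_E ⌟. -/

import Mathlib

set_option synthInstance.maxHeartbeats 1000000
set_option maxHeartbeats 1000000

noncomputable section

abbrev Rq : Type := RatFunc ℂ
abbrev qq : Rq := RatFunc.X

def wval (w : ℤ × ℤ) : ℤ := w.1 + w.2
def wpar (w : ℤ × ℤ) : ℤ := w.2

/-- The quantum integer `[m]_q`. -/
def qint (k : ℤ) : Rq := (qq ^ k - qq ^ (-k)) / (qq - qq⁻¹)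

/-!
Contraction with `l_E` is an odd derivation, so `E(l₀ ∧ l_I) = E(l₀) l_I - l₀ ∧ E(l_I)`, and it
suffices that `E(l_i) = 0` and `E(l₀) = 1`. The first holds because the coefficient of `e_k` in
`l_E` changes by exactly the factor `(-1)^{p(λ_k)} q^{λ_{k+1}}` from `k` to `k + 1`. Hence also
`E(l₀) = E(l_F) = Σ_j q^{λ_{<j} - λ_{>j}} [λ_j]`, which is the telescoping `q`-expansion of
`[Σ_j λ_j] = [1] = 1`.
-/

open Finset

namespace Fin

variable {M : Type*} [AddCommMonoid M] {m : ℕ}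

theorem sum_Iio_succ (f : Fin (m + 1) → M) (i : Fin m) :
    ∑ j < i.succ, f j = ∑ j < i.castSucc, f j + f i.castSucc := by
  rw [sum_Iio_add_eq_sum_Iic]
  congr 1

theorem sum_Ioi_castSucc (f : Fin (m + 1) → M) (i : Fin m) :
    ∑ j > i.castSucc, f j = ∑ j > i.succ, f j + f i.succ := by
  rw [sum_Ioi_add_eq_sum_Ici]
  congr 1
  ext j
  simp [castSucc_lt_iff_succ_le]

theorem sum_Iic_sub_sum_Iio_telescope {G : Type*} [AddCommGroup G] (v : Fin m → M) (g : M → G) :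
    ∑ j, (g (∑ i ≤ j, v i) - g (∑ i < j, v i)) = g (∑ i, v i) - g 0 := by
  induction m with
  | zero => simp
  | succ m ih =>
    rw [sum_univ_castSucc]
    simp only [sum_Iic_castSucc, sum_Iio_castSucc, ih]
    rw [← sum_Iio_add_eq_sum_Iic, Iio_last_eq_map, sum_map, sum_univ_castSucc (f := v)]
    simp only [castSuccEmb_apply]
    abel

end Fin

theorem Finset.sum_Iio_add_add_sum_Ioi {α M : Type*} [LinearOrder α] [Fintype α]
    [LocallyFiniteOrderBot α] [LocallyFiniteOrderTop α] [AddCommMonoid M] (f : α → M) (a : α) :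
    ∑ x < a, f x + f a + ∑ x > a, f x = ∑ x, f x := by
  rw [sum_Iio_add_eq_sum_Iic, ← sum_union (disjoint_left.2 fun x hxa hax => ?_)]
  · congr 1
    ext x
    simp [le_or_gt]
  · exact (mem_Iic.1 hxa).not_gt (mem_Ioi.1 hax)

lemma qq_ne_zero : qq ≠ 0 := RatFunc.X_ne_zero

lemma qq_sub_inv_ne_zero : qq - qq⁻¹ ≠ 0 := by
  intro h
  have := congrArg RatFunc.intDegree (sub_eq_zero.mp h)
  rw [RatFunc.intDegree_inv, RatFunc.intDegree_X] at this
  omega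

lemma qint_one : qint 1 = 1 := by
  simpa [qint] using div_self qq_sub_inv_ne_zero

lemma zpow_mul_qint (a b : ℤ) : qq ^ a * qint b = (qq ^ (a + b) - qq ^ (a - b)) / (qq - qq⁻¹) := by
  rw [qint, mul_div_assoc', mul_sub, ← zpow_add₀ qq_ne_zero, ← zpow_add₀ qq_ne_zero,
    ← sub_eq_add_neg]

theorem qint_sum {m : ℕ} (v : Fin m → ℤ) :
    qint (∑ i, v i) = ∑ j, qq ^ (∑ i < j, v i - ∑ i > j, v i) * qint (v j) := by
  set s := ∑ i, v i
  let g : ℤ → Rq := fun x => qq ^ (2 * x - s) / (qq - qq⁻¹)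
  have hterm : ∀ j, qq ^ (∑ i < j, v i - ∑ i > j, v i) * qint (v j) =
      g (∑ i ≤ j, v i) - g (∑ i < j, v i) := by
    intro j
    have hsplit := sum_Iio_add_add_sum_Ioi v j
    rw [← sum_Iio_add_eq_sum_Iic, zpow_mul_qint, ← sub_div]
    congr 3 <;> omega
  rw [sum_congr rfl fun j _ => hterm j, Fin.sum_Iic_sub_sum_Iio_telescope, ← sub_div, qint]
  congr 3 <;> ring

namespace CliffordAlgebra

variable {R N : Type*} [CommRing R] [AddCommGroup N] [Module R N] {Q : QuadraticForm R N}
  (d : Module.Dual R N)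

theorem contractLeft_prod_map_ι_eq_zero {κ : Type*} (f : κ → N) (L : List κ)
    (hL : ∀ i ∈ L, d (f i) = 0) :
    contractLeft d (L.map fun i => ι Q (f i)).prod = 0 := by
  induction L with
  | nil => simp
  | cons a t ih =>
    rw [List.map_cons, List.prod_cons, contractLeft_ι_mul,
      hL a List.mem_cons_self, ih fun i hi => hL i (List.mem_cons_of_mem a hi)]
    simp

theorem contractLeft_ι_mul_eq_self {a : N} (ha : d a = 1) {b : CliffordAlgebra Q}
    (hb : contractLeft d b = 0) :
    contractLeft d (ι Q a * b) = b := by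
  rw [contractLeft_ι_mul, ha, hb, one_smul, mul_zero, sub_zero]

end CliffordAlgebra

theorem LinearMap.sum_smul_proj_apply_single {R ι : Type*} [CommSemiring R] [Fintype ι]
    [DecidableEq ι] (c : ι → R) (k : ι) :
    (∑ j, c j • LinearMap.proj j : (ι → R) →ₗ[R] R) (Pi.single k 1) = c k := by
  simp [Pi.single_apply]

def contractionWeight {m : ℕ} (v p : Fin m → ℤ) (k : Fin m) : Rq :=
  (-1) ^ (∑ j < k, p j) * qq ^ (-∑ j > k, v j)

lemma contractionWeight_succ {m : ℕ} (v p : Fin (m + 1) → ℤ) (i : Fin m) :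
    qq ^ (-v i.succ) * contractionWeight v p i.succ =
      (-1) ^ p i.castSucc * contractionWeight v p i.castSucc := by
  rw [contractionWeight, contractionWeight, Fin.sum_Iio_succ, Fin.sum_Ioi_castSucc, neg_add_rev,
    zpow_add₀ qq_ne_zero, zpow_add₀ (neg_ne_zero.mpr one_ne_zero)]
  ring

theorem stmt7_general {n : ℕ} (wt : Fin (n + 1) → ℤ × ℤ)
    (hval : ∑ j, wval (wt j) = 1) :
    let M : Type := Fin (n + 1) → Rq
    let e : Fin (n + 1) → M := fun j => Pi.single j 1
    let psumLt : Fin (n + 1) → ℤ := fun j => ∑ i ∈ Finset.univ.filter (· < j), wpar (wt i)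
    let vsumLt : Fin (n + 1) → ℤ := fun j => ∑ i ∈ Finset.univ.filter (· < j), wval (wt i)
    let vsumGt : Fin (n + 1) → ℤ := fun j => ∑ i ∈ Finset.univ.filter (j < ·), wval (wt i)
    let psumLe : Fin (n + 1) → ℤ := fun j => ∑ i ∈ Finset.univ.filter (· ≤ j), wpar (wt i)
    let vsumLe : Fin (n + 1) → ℤ := fun j => ∑ i ∈ Finset.univ.filter (· ≤ j), wval (wt i)
    let phiE : Module.Dual Rq M :=
      ∑ j, (((-1 : Rq) ^ psumLt j) * qq ^ (-(vsumGt j))) • LinearMap.proj j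
    let lF : M :=
      ∑ j, (((-1 : Rq) ^ psumLt j) * qq ^ (vsumLt j) * qint (wval (wt j))) • e j
    let lvec : Fin n → M := fun i =>
      (-((-1 : Rq) ^ wpar (wt i.castSucc))) • e i.castSucc +
        (qq ^ (-(wval (wt i.succ)))) • e i.succ
    let l0 : M :=
      lF - ∑ j : Fin n,
        (((-1 : Rq) ^ psumLe j.castSucc) * qq ^ (-(vsumLe j.castSucc))) • lvec j
    let lprod : Finset (Fin n) → ExteriorAlgebra Rq M := fun I =>
      ((I.sort (· ≤ ·)).map fun i => ExteriorAlgebra.ι Rq (lvec i)).prod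
    ∀ I : Finset (Fin n),
      CliffordAlgebra.contractLeft (Q := (0 : QuadraticForm Rq M)) phiE
        (ExteriorAlgebra.ι Rq l0 * lprod I) = lprod I := by
  intro M e psumLt vsumLt vsumGt psumLe vsumLe phiE lF lvec l0 lprod I
  let v : Fin (n + 1) → ℤ := fun j => wval (wt j)
  let p : Fin (n + 1) → ℤ := fun j => wpar (wt j)
  have hE : ∀ k, phiE (e k) = contractionWeight v p k := by
    intro k
    refine (LinearMap.sum_smul_proj_apply_single _ k).trans ?_
    simp only [contractionWeight, psumLt, vsumGt, v, p, filter_gt_eq_Iio, filter_lt_eq_Ioi]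
  have hlvec : ∀ i, phiE (lvec i) = 0 := by
    intro i
    simp only [lvec, map_add, map_smul, hE, smul_eq_mul]
    linear_combination contractionWeight_succ v p i
  have hlF : phiE lF = 1 := by
    rw [← qint_one, ← hval, qint_sum]
    simp only [lF, map_sum, map_smul, hE, smul_eq_mul]
    refine sum_congr rfl fun j _ => ?_
    simp only [contractionWeight, psumLt, vsumLt, v, p, filter_gt_eq_Iio,
      zpow_sub₀ qq_ne_zero, zpow_neg]
    have hsign : ((-1 : Rq) ^ ∑ i < j, wpar (wt i)) * (-1) ^ ∑ i < j, wpar (wt i) = 1 := by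
      rw [← mul_zpow, neg_one_mul, neg_neg, one_zpow]
    linear_combination (qq ^ (∑ i < j, wval (wt i)) * qint (wval (wt j)) *
      (qq ^ ∑ i > j, wval (wt i))⁻¹) * hsign
  have hl0 : phiE l0 = 1 := by
    simp [l0, hlF, hlvec]
  exact CliffordAlgebra.contractLeft_ι_mul_eq_self phiE hl0
    (CliffordAlgebra.contractLeft_prod_map_ι_eq_zero phiE lvec _ fun i _ => hlvec i)

/-- In the exterior-algebra model of `V_P ⊗ L(λ_{n+1})`
(weight sequence `λ₁, …, λ_{n+1}`, with each `λᵢ ∈ {ε₁, -ε₂}` for `i ≤ n` and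
`⟨h₁+h₂, λ_{n+1}⟩ = 1 - Σᵢ Pᵢ`, i.e. the values `⟨h₁+h₂, λᵢ⟩` sum to `1`), define
`l₀ = l_F - Σ_{j=1}^n (-1)^{p(λ_{≤j})} q^{-λ_{≤j}} l_j`.  Then
`E(l₀ ∧ l_I) = l_I` for every subset `I ⊆ {1, …, n}`, where `E = l_E ⌟`. -/
theorem stmt7 {n : ℕ} (P : Fin n → ℤ) (hP : ∀ i, P i = 1 ∨ P i = -1)
    (wt : Fin (n + 1) → ℤ × ℤ)
    (hwt : ∀ i : Fin n, wt i.castSucc = if P i = 1 then (1, 0) else (0, -1))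
    (hval : ∑ j, wval (wt j) = 1) :
    let M : Type := Fin (n + 1) → Rq
    let e : Fin (n + 1) → M := fun j => Pi.single j 1
    let psumLt : Fin (n + 1) → ℤ := fun j => ∑ i ∈ Finset.univ.filter (· < j), wpar (wt i)
    let vsumLt : Fin (n + 1) → ℤ := fun j => ∑ i ∈ Finset.univ.filter (· < j), wval (wt i)
    let vsumGt : Fin (n + 1) → ℤ := fun j => ∑ i ∈ Finset.univ.filter (j < ·), wval (wt i)
    let psumLe : Fin (n + 1) → ℤ := fun j => ∑ i ∈ Finset.univ.filter (· ≤ j), wpar (wt i)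
    let vsumLe : Fin (n + 1) → ℤ := fun j => ∑ i ∈ Finset.univ.filter (· ≤ j), wval (wt i)
    let phiE : Module.Dual Rq M :=
      ∑ j, (((-1 : Rq) ^ psumLt j) * qq ^ (-(vsumGt j))) • LinearMap.proj j
    let lF : M :=
      ∑ j, (((-1 : Rq) ^ psumLt j) * qq ^ (vsumLt j) * qint (wval (wt j))) • e j
    let lvec : Fin n → M := fun i =>
      (-((-1 : Rq) ^ wpar (wt i.castSucc))) • e i.castSucc +
        (qq ^ (-(wval (wt i.succ)))) • e i.succ
    let l0 : M :=
      lF - ∑ j : Fin n,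
        (((-1 : Rq) ^ psumLe j.castSucc) * qq ^ (-(vsumLe j.castSucc))) • lvec j
    let lprod : Finset (Fin n) → ExteriorAlgebra Rq M := fun I =>
      ((I.sort (· ≤ ·)).map fun i => ExteriorAlgebra.ι Rq (lvec i)).prod
    ∀ I : Finset (Fin n),
      CliffordAlgebra.contractLeft (Q := (0 : QuadraticForm Rq M)) phiE
        (ExteriorAlgebra.ι Rq l0 * lprod I) = lprod I :=
  stmt7_general wt hval

end
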